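/- Given a noncommutative probability space (A, φ) (a unital complex algebra with a unital linear functional φ), there exists a unique family of multilinear functionals κ_χ : A^n → ℂ, indexed by n ≥ 1 and χ ∈ {ℓ,r}^n, such that for all n, χ, and a_1, ..., a_n ∈ A: φ(a_1 ⋯ a_n) = Σ_{π ∈ P^(χ)(n)} Π_{V ∈ π} κ_{χ|V}((a_1,...,a_n)|V). -/
import Mathlib

open scoped Classical

/-- `P` is a partition of `{1,...,n}` (modelled on `Fin n`). -/
def IsPartition {n : ℕ} (P : Finset (Finset (Fin n))) : Prop :=
  ∅ ∉ P ∧ ∀ a : Fin n, ∃! V, V ∈ P ∧ a ∈ V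

/-- `P` is non-crossing. -/
def IsNC {n : ℕ} (P : Finset (Finset (Fin n))) : Prop :=
  ¬ ∃ V ∈ P, ∃ W ∈ P, V ≠ W ∧ ∃ a b c d : Fin n,
    a < b ∧ b < c ∧ c < d ∧ a ∈ V ∧ c ∈ V ∧ b ∈ W ∧ d ∈ W

/-- The permutation `σ_χ` associated with `χ ∈ {ℓ,r}^n` (with `ℓ = true`,
`r = false`): it lists the `ℓ`-positions of `χ` in increasing order, followed by the
`r`-positions in decreasing order. -/
def sigmaChi {n : ℕ} (χ : Fin n → Bool) : Fin n → Fin n :=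
  fun i => (((List.finRange n).filter χ) ++
    (((List.finRange n).filter (fun j => !(χ j))).reverse)).getD i i

/-- The set of partitions `P^(χ)(n) = {σ_χ·π : π ∈ NC(n)}`. -/
noncomputable def PchiF (n : ℕ) (χ : Fin n → Bool) :
    Finset (Finset (Finset (Fin n))) :=
  (Finset.univ.filter (fun P => IsPartition P ∧ IsNC P)).image
    (fun P => P.image (Finset.image (sigmaChi χ)))


/-- Restriction of an `n`-tuple to a subset `V` of indices, listed in increasing
order. -/
noncomputable def restr {n : ℕ} {α : Type*} (x : Fin n → α) (V : Finset (Fin n)) :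
    Fin V.card → α :=
  fun i => x (V.orderIsoOfFin rfl i).1

/-- The moment ↔ `(ℓ,r)`-cumulant formula: for all `n ≥ 1`, `χ ∈ {ℓ,r}^n` and
`a_1, ..., a_n ∈ A`, `φ(a_1 ⋯ a_n) = Σ_{π ∈ P^(χ)(n)} Π_{V ∈ π}
κ_{χ|V}((a_1,...,a_n)|V)`. -/
def momentFormula {A : Type*} [Ring A] [Algebra ℂ A] (φ : A →ₗ[ℂ] ℂ)
    (κ : (m : ℕ) → (Fin m → Bool) → MultilinearMap ℂ (fun _ : Fin m => A) ℂ) :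
    Prop :=
  ∀ (n : ℕ), 1 ≤ n → ∀ (χ : Fin n → Bool) (a : Fin n → A),
    φ ((List.ofFn a).prod) =
      ∑ π ∈ PchiF n χ, ∏ V ∈ π, κ V.card (restr χ V) (restr a V)

/-! ### Auxiliary lemmas -/

section Aux

variable {n : ℕ}

private lemma sigmaChi_list_length (χ : Fin n → Bool) :
    (((List.finRange n).filter χ) ++
      (((List.finRange n).filter (fun j => !(χ j))).reverse)).length = n := by
  have h := List.length_eq_length_filter_add (l := List.finRange n) χ
  simp only [List.length_finRange] at h
  simp only [List.length_append, List.length_reverse]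
  omega

private lemma sigmaChi_list_nodup (χ : Fin n → Bool) :
    (((List.finRange n).filter χ) ++
      (((List.finRange n).filter (fun j => !(χ j))).reverse)).Nodup := by
  refine List.Nodup.append ?_ ?_ ?_
  · exact (List.nodup_finRange n).filter _
  · exact List.nodup_reverse.mpr ((List.nodup_finRange n).filter _)
  · intro x hx hx'
    simp only [List.mem_reverse, List.mem_filter] at hx hx'
    rw [hx.2] at hx'
    simp at hx'

lemma sigmaChi_injective (χ : Fin n → Bool) : Function.Injective (sigmaChi χ) := by
  intro i j hij
  have hL := sigmaChi_list_length χ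
  have hi : (i : ℕ) < (((List.finRange n).filter χ) ++
      (((List.finRange n).filter (fun j => !(χ j))).reverse)).length := by
    rw [hL]; exact i.isLt
  have hj : (j : ℕ) < (((List.finRange n).filter χ) ++
      (((List.finRange n).filter (fun j => !(χ j))).reverse)).length := by
    rw [hL]; exact j.isLt
  unfold sigmaChi at hij
  rw [List.getD_eq_getElem _ _ hi, List.getD_eq_getElem _ _ hj] at hij
  exact Fin.ext ((sigmaChi_list_nodup χ).getElem_inj_iff.mp hij)

lemma sigmaChi_bijective (χ : Fin n → Bool) : Function.Bijective (sigmaChi χ) :=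
  Finite.injective_iff_bijective.mp (sigmaChi_injective χ)

lemma isPartition_image {P : Finset (Finset (Fin n))} (hP : IsPartition P)
    {f : Fin n → Fin n} (hf : Function.Bijective f) :
    IsPartition (P.image (Finset.image f)) := by
  constructor
  · intro h
    obtain ⟨V, hV, hVe⟩ := Finset.mem_image.mp h
    rw [Finset.image_eq_empty] at hVe
    exact hP.1 (hVe ▸ hV)
  · intro a
    obtain ⟨b, rfl⟩ := hf.2 a
    obtain ⟨V, ⟨hVP, hbV⟩, hun⟩ := hP.2 b
    refine ⟨V.image f, ⟨Finset.mem_image_of_mem _ hVP, Finset.mem_image_of_mem _ hbV⟩, ?_⟩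
    rintro W ⟨hWP, hbW⟩
    obtain ⟨U, hUP, rfl⟩ := Finset.mem_image.mp hWP
    obtain ⟨c, hcU, hcb⟩ := Finset.mem_image.mp hbW
    obtain rfl := hf.1 hcb
    rw [hun U ⟨hUP, hcU⟩]

lemma isPartition_of_mem_PchiF {χ : Fin n → Bool} {π : Finset (Finset (Fin n))}
    (hπ : π ∈ PchiF n χ) : IsPartition π := by
  obtain ⟨P, hP, rfl⟩ := Finset.mem_image.mp hπ
  exact isPartition_image (Finset.mem_filter.mp hP).2.1 (sigmaChi_bijective χ)

lemma full_mem_PchiF (hn : 1 ≤ n) (χ : Fin n → Bool) :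
    {(Finset.univ : Finset (Fin n))} ∈ PchiF n χ := by
  haveI : NeZero n := ⟨by omega⟩
  refine Finset.mem_image.mpr ⟨{Finset.univ}, Finset.mem_filter.mpr ⟨Finset.mem_univ _, ?_, ?_⟩, ?_⟩
  · constructor
    · intro h
      rw [Finset.mem_singleton] at h
      exact (Finset.univ_nonempty).ne_empty h.symm
    · intro a
      exact ⟨Finset.univ, ⟨Finset.mem_singleton_self _, Finset.mem_univ _⟩,
        fun W hW => Finset.mem_singleton.mp hW.1⟩
  · rintro ⟨V, hV, W, hW, hVW, -⟩
    rw [Finset.mem_singleton] at hV hW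
    exact hVW (hV.trans hW.symm)
  · rw [Finset.image_singleton, Finset.image_univ_of_surjective (sigmaChi_bijective χ).2]

lemma block_nonempty {π : Finset (Finset (Fin n))} (hπ : IsPartition π)
    {V : Finset (Fin n)} (hV : V ∈ π) : V.Nonempty := by
  rw [Finset.nonempty_iff_ne_empty]
  rintro rfl
  exact hπ.1 hV

lemma card_lt_of_mem_PchiF {χ : Fin n → Bool} {π : Finset (Finset (Fin n))}
    (hπ : π ∈ PchiF n χ) (hne : π ≠ {Finset.univ}) {V : Finset (Fin n)}
    (hV : V ∈ π) : V.card < n := by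
  have hP := isPartition_of_mem_PchiF hπ
  have hle : V.card ≤ n := by
    simpa using Finset.card_le_card (Finset.subset_univ V)
  rcases lt_or_eq_of_le hle with h | h
  · exact h
  · exfalso
    have hVuniv : V = Finset.univ := Finset.eq_univ_of_card V (by simpa using h)
    apply hne
    subst hVuniv
    apply Finset.eq_singleton_iff_unique_mem.mpr
    refine ⟨hV, fun W hW => ?_⟩
    obtain ⟨a, ha⟩ := block_nonempty hP hW
    obtain ⟨U, -, hun⟩ := hP.2 a
    rw [hun W ⟨hW, ha⟩, hun Finset.univ ⟨hV, Finset.mem_univ _⟩]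

lemma restr_update_of_notMem {α : Type*} [DecidableEq (Fin n)] {a : Fin n → α}
    {V : Finset (Fin n)} {i : Fin n} (hi : i ∉ V) (x : α) :
    restr (Function.update a i x) V = restr a V := by
  funext j
  simp only [restr]
  rw [Function.update_of_ne]
  intro h
  exact hi (h ▸ (V.orderIsoOfFin rfl j).2)

lemma restr_update_of_mem {α : Type*} [DecidableEq (Fin n)] {a : Fin n → α}
    {V : Finset (Fin n)} {i : Fin n} (hi : i ∈ V) (x : α) :
    restr (Function.update a i x) V =
      Function.update (restr a V) ((V.orderIsoOfFin rfl).symm ⟨i, hi⟩) x := by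
  funext j
  by_cases hj : j = (V.orderIsoOfFin rfl).symm ⟨i, hi⟩
  · subst hj
    rw [Function.update_self]
    simp only [restr]
    rw [OrderIso.apply_symm_apply]
    exact Function.update_self _ _ _
  · rw [Function.update_of_ne hj]
    simp only [restr]
    rw [Function.update_of_ne]
    intro h
    apply hj
    have : V.orderIsoOfFin rfl j = ⟨i, hi⟩ := Subtype.ext h
    rw [← this, OrderIso.symm_apply_apply]

end Aux

section Kappa

variable {A : Type*} [Ring A] [Algebra ℂ A]

/-- The product of multilinear functionals over the blocks of a partition is a
multilinear functional. -/
noncomputable def blockProd {n : ℕ} (π : Finset (Finset (Fin n))) (hπ : IsPartition π)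
    (f : (V : Finset (Fin n)) → MultilinearMap ℂ (fun _ : Fin V.card => A) ℂ) :
    MultilinearMap ℂ (fun _ : Fin n => A) ℂ where
  toFun a := ∏ V ∈ π, f V (restr a V)
  map_update_add' a i x y := by
    obtain ⟨V₀, ⟨hV₀, hiV₀⟩, huniq⟩ := hπ.2 i
    have herase : ∀ z : A, ∀ V ∈ π.erase V₀,
        f V (restr (Function.update a i z) V) = f V (restr a V) := by
      intro z V hV
      have hiV : i ∉ V := fun h =>
        (Finset.mem_erase.mp hV).1 (huniq V ⟨(Finset.mem_erase.mp hV).2, h⟩)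
      rw [restr_update_of_notMem hiV]
    rw [← Finset.mul_prod_erase π _ hV₀, ← Finset.mul_prod_erase π _ hV₀,
      ← Finset.mul_prod_erase π _ hV₀,
      Finset.prod_congr rfl (herase (x + y)), Finset.prod_congr rfl (herase x),
      Finset.prod_congr rfl (herase y),
      restr_update_of_mem hiV₀, restr_update_of_mem hiV₀, restr_update_of_mem hiV₀,
      (f V₀).map_update_add, add_mul]
  map_update_smul' a i c x := by
    obtain ⟨V₀, ⟨hV₀, hiV₀⟩, huniq⟩ := hπ.2 i
    have herase : ∀ z : A, ∀ V ∈ π.erase V₀,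
        f V (restr (Function.update a i z) V) = f V (restr a V) := by
      intro z V hV
      have hiV : i ∉ V := fun h =>
        (Finset.mem_erase.mp hV).1 (huniq V ⟨(Finset.mem_erase.mp hV).2, h⟩)
      rw [restr_update_of_notMem hiV]
    rw [← Finset.mul_prod_erase π _ hV₀, ← Finset.mul_prod_erase π _ hV₀,
      Finset.prod_congr rfl (herase (c • x)), Finset.prod_congr rfl (herase x),
      restr_update_of_mem hiV₀, restr_update_of_mem hiV₀,
      (f V₀).map_update_smul, smul_mul_assoc]

/-- The `(ℓ,r)`-cumulants, defined by recursion on `m`. -/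
noncomputable def kappa (φ : A →ₗ[ℂ] ℂ) (m : ℕ) (χ : Fin m → Bool) :
    MultilinearMap ℂ (fun _ : Fin m => A) ℂ :=
  φ.compMultilinearMap (MultilinearMap.mkPiAlgebraFin ℂ m A) -
    ∑ π ∈ ((PchiF m χ).erase {Finset.univ}).attach,
      blockProd π.1 (isPartition_of_mem_PchiF (Finset.mem_of_mem_erase π.2))
        (fun V => if h : V.card < m then kappa φ V.card (restr χ V) else 0)
  termination_by m
  decreasing_by exact h

lemma restr_univ_apply {α : Type*} {m : ℕ} (x : Fin m → α)
    (i : Fin (Finset.univ : Finset (Fin m)).card) :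
    restr x Finset.univ i = x (Fin.cast (Finset.card_fin m) i) := by
  have hf : (fun j : Fin (Finset.univ : Finset (Fin m)).card =>
      Fin.cast (Finset.card_fin m) j) = (Finset.univ.orderEmbOfFin rfl : _ → Fin m) := by
    apply Finset.orderEmbOfFin_unique
    · intro x; exact Finset.mem_univ _
    · intro a b hab; exact hab
  simp only [restr]
  rw [Finset.coe_orderIsoOfFin_apply, ← hf]

lemma restr_univ {α : Type*} {m : ℕ} (x : Fin m → α) :
    restr x (Finset.univ : Finset (Fin m)) = x ∘ Fin.cast (Finset.card_fin m) :=
  funext (restr_univ_apply x)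

lemma family_cast (κ : (m : ℕ) → (Fin m → Bool) → MultilinearMap ℂ (fun _ : Fin m => A) ℂ)
    {m m' : ℕ} (h : m' = m) (χ : Fin m → Bool) (a : Fin m → A) :
    κ m' (χ ∘ Fin.cast h) (a ∘ Fin.cast h) = κ m χ a := by
  subst h
  rfl

lemma full_term (κ : (m : ℕ) → (Fin m → Bool) → MultilinearMap ℂ (fun _ : Fin m => A) ℂ)
    {m : ℕ} (χ : Fin m → Bool) (a : Fin m → A) :
    κ (Finset.univ : Finset (Fin m)).card (restr χ Finset.univ) (restr a Finset.univ) =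
      κ m χ a := by
  rw [restr_univ χ, restr_univ a, family_cast]

@[simp] lemma blockProd_apply {n : ℕ} (π : Finset (Finset (Fin n))) (hπ : IsPartition π)
    (f : (V : Finset (Fin n)) → MultilinearMap ℂ (fun _ : Fin V.card => A) ℂ)
    (a : Fin n → A) : blockProd π hπ f a = ∏ V ∈ π, f V (restr a V) := rfl

lemma kappa_eq (φ : A →ₗ[ℂ] ℂ) (m : ℕ) (χ : Fin m → Bool) (a : Fin m → A) :
    kappa φ m χ a = φ ((List.ofFn a).prod) -
      ∑ π ∈ ((PchiF m χ).erase {Finset.univ}),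
        ∏ V ∈ π, kappa φ V.card (restr χ V) (restr a V) := by
  have hsum : ∑ π ∈ ((PchiF m χ).erase {Finset.univ}).attach,
      (blockProd π.1 (isPartition_of_mem_PchiF (Finset.mem_of_mem_erase π.2))
        (fun V => if h : V.card < m then kappa φ V.card (restr χ V) else 0)) a =
      ∑ π ∈ ((PchiF m χ).erase {Finset.univ}),
        ∏ V ∈ π, kappa φ V.card (restr χ V) (restr a V) := by
    rw [← Finset.sum_attach ((PchiF m χ).erase {Finset.univ})
      (fun π => ∏ V ∈ π, kappa φ V.card (restr χ V) (restr a V))]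
    apply Finset.sum_congr rfl
    intro π _
    rw [blockProd_apply]
    apply Finset.prod_congr rfl
    intro V hV
    rw [dif_pos (card_lt_of_mem_PchiF (Finset.mem_of_mem_erase π.2)
      (Finset.mem_erase.mp π.2).1 hV)]
  rw [kappa, MultilinearMap.sub_apply, MultilinearMap.sum_apply, hsum,
    LinearMap.compMultilinearMap_apply, MultilinearMap.mkPiAlgebraFin_apply]

lemma kappa_moment (φ : A →ₗ[ℂ] ℂ) : momentFormula φ (kappa φ) := by
  intro n hn χ a
  rw [← Finset.add_sum_erase _ _ (full_mem_PchiF hn χ), Finset.prod_singleton,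
    full_term (kappa φ) χ a, kappa_eq]
  ring

lemma kappa_unique (φ : A →ₗ[ℂ] ℂ)
    (κ' : (m : ℕ) → (Fin m → Bool) → MultilinearMap ℂ (fun _ : Fin m => A) ℂ)
    (h' : momentFormula φ κ') :
    ∀ m : ℕ, 1 ≤ m → ∀ χ : Fin m → Bool, κ' m χ = kappa φ m χ := by
  intro m
  induction m using Nat.strong_induction_on with
  | _ m ih =>
    intro hm χ
    ext a
    have h2 := (h' m hm χ a).symm.trans (kappa_moment φ m hm χ a)
    rw [← Finset.add_sum_erase _ _ (full_mem_PchiF hm χ),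
      ← Finset.add_sum_erase _ _ (full_mem_PchiF hm χ)] at h2
    have hsum : ∑ π ∈ ((PchiF m χ).erase {Finset.univ}),
        ∏ V ∈ π, κ' V.card (restr χ V) (restr a V) =
        ∑ π ∈ ((PchiF m χ).erase {Finset.univ}),
        ∏ V ∈ π, kappa φ V.card (restr χ V) (restr a V) := by
      apply Finset.sum_congr rfl
      intro π hπ
      apply Finset.prod_congr rfl
      intro V hV
      have hlt : V.card < m := card_lt_of_mem_PchiF (Finset.mem_of_mem_erase hπ)
        (Finset.mem_erase.mp hπ).1 hV
      have hge : 1 ≤ V.card := Finset.card_pos.mpr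
        (block_nonempty (isPartition_of_mem_PchiF (Finset.mem_of_mem_erase hπ)) hV)
      rw [ih V.card hlt hge (restr χ V)]
    rw [hsum] at h2
    have h3 := add_right_cancel h2
    rw [Finset.prod_singleton, Finset.prod_singleton, full_term κ' χ a,
      full_term (kappa φ) χ a] at h3
    exact h3

end Kappa

/-- Existence and uniqueness of the family of multilinear `(ℓ,r)`-cumulant
functionals of a noncommutative probability space `(A, φ)`. -/
theorem stmt16 (A : Type*) [Ring A] [Algebra ℂ A] (φ : A →ₗ[ℂ] ℂ) (hφ : φ 1 = 1) :
    ∃ κ : (m : ℕ) → (Fin m → Bool) → MultilinearMap ℂ (fun _ : Fin m => A) ℂ,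
      momentFormula φ κ ∧
      ∀ κ' : (m : ℕ) → (Fin m → Bool) → MultilinearMap ℂ (fun _ : Fin m => A) ℂ,
        momentFormula φ κ' → ∀ m : ℕ, 1 ≤ m → ∀ χ : Fin m → Bool,
          κ' m χ = κ m χ :=
  ⟨kappa φ, kappa_moment φ, fun κ' h' => kappa_unique φ κ' h'⟩
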